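/- arXiv:2006.11266 — 2 statements merged into one kernel-verified Lean document; each statement's English description precedes it below -/
import Mathlib

section
/- For strictly positive policies π and π₀ on T: if KL(Rπ₀ ‖ π) < KL(Rπ₀ ‖ π₀), then J(π) > J(π₀). That is, any policy that is strictly closer (in KL) to the improved policy Rπ₀ than π₀ itself achieves strictly larger expected return, even when the KL projection is only carried out approximately. -/
/-- Expected return `J(π) = ∑ τ, R τ * π τ`. -/
noncomputable def Jexp {T : Type*} [Fintype T] (R π : T → ℝ) : ℝ := ∑ τ, R τ * π τ

/-- Improved policy `Rπ(τ) = R τ * π τ / J(π)`. -/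
noncomputable def impPolicy {T : Type*} [Fintype T] (R π : T → ℝ) (τ : T) : ℝ :=
  R τ * π τ / Jexp R π

/-- KL divergence between pmfs on a finite type (with `0 * log 0 = 0`). -/
noncomputable def klDiv {T : Type*} [Fintype T] (p q : T → ℝ) : ℝ :=
  ∑ τ, p τ * Real.log (p τ / q τ)

/-!
Writing `p = Rπ₀`, the gain `KL(p ‖ π₀) - KL(p ‖ π)` equals `∑ p log (π / π₀)`. By `log x ≤ x - 1`
this is at most `∑ p (π / π₀ - 1)`, and since `p π / π₀ = R π / J(π₀)` the latter sum is
`J(π) / J(π₀) - 1`. A positive gain therefore forces `J(π) > J(π₀)`.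
-/

open Finset

section

variable {T : Type*} [Fintype T]

theorem klDiv_sub_klDiv (p q q' : T → ℝ) (hq : ∀ τ, q τ ≠ 0) (hq' : ∀ τ, q' τ ≠ 0) :
    klDiv p q - klDiv p q' = ∑ τ, p τ * Real.log (q' τ / q τ) := by
  unfold klDiv
  rw [← sum_sub_distrib]
  refine sum_congr rfl fun τ _ => ?_
  rcases eq_or_ne (p τ) 0 with hp | hp
  · simp [hp]
  · rw [Real.log_div hp (hq τ), Real.log_div hp (hq' τ), Real.log_div (hq' τ) (hq τ)]
    ring

theorem sum_mul_log_le_sum_mul_sub_one (p x : T → ℝ) (hp : ∀ τ, 0 ≤ p τ) (hx : ∀ τ, 0 < x τ) :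
    ∑ τ, p τ * Real.log (x τ) ≤ ∑ τ, p τ * (x τ - 1) :=
  sum_le_sum fun τ _ => mul_le_mul_of_nonneg_left (Real.log_le_sub_one_of_pos (hx τ)) (hp τ)

theorem Jexp_pos [Nonempty T] {R π : T → ℝ} (hR : ∀ τ, 0 < R τ) (hπ : ∀ τ, 0 < π τ) :
    0 < Jexp R π :=
  sum_pos (fun τ _ => mul_pos (hR τ) (hπ τ)) univ_nonempty

theorem sum_impPolicy_mul_div_sub_one (R π π₀ : T → ℝ) (hπ₀ : ∀ τ, π₀ τ ≠ 0)
    (hJ : Jexp R π₀ ≠ 0) :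
    ∑ τ, impPolicy R π₀ τ * (π τ / π₀ τ - 1) = Jexp R π / Jexp R π₀ - 1 := by
  have term : ∀ τ, impPolicy R π₀ τ * (π τ / π₀ τ - 1) =
      R τ * π τ / Jexp R π₀ - R τ * π₀ τ / Jexp R π₀ := by
    intro τ
    unfold impPolicy
    field_simp [hπ₀ τ]
  simp only [term, sum_sub_distrib, ← sum_div]
  rw [← Jexp, ← Jexp, div_self hJ]

theorem klDiv_impPolicy_sub_klDiv_le [Nonempty T] {R π π₀ : T → ℝ} (hR : ∀ τ, 0 < R τ)
    (hπ : ∀ τ, 0 < π τ) (hπ₀ : ∀ τ, 0 < π₀ τ) :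
    klDiv (impPolicy R π₀) π₀ - klDiv (impPolicy R π₀) π ≤ Jexp R π / Jexp R π₀ - 1 := by
  have hJ₀ := Jexp_pos hR hπ₀
  have hp : ∀ τ, 0 ≤ impPolicy R π₀ τ := fun τ => by
    unfold impPolicy
    exact div_nonneg (mul_pos (hR τ) (hπ₀ τ)).le hJ₀.le
  calc klDiv (impPolicy R π₀) π₀ - klDiv (impPolicy R π₀) π
      = ∑ τ, impPolicy R π₀ τ * Real.log (π τ / π₀ τ) :=
        klDiv_sub_klDiv _ _ _ (fun τ => (hπ₀ τ).ne') (fun τ => (hπ τ).ne')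
    _ ≤ ∑ τ, impPolicy R π₀ τ * (π τ / π₀ τ - 1) :=
        sum_mul_log_le_sum_mul_sub_one _ _ hp fun τ => div_pos (hπ τ) (hπ₀ τ)
    _ = Jexp R π / Jexp R π₀ - 1 :=
        sum_impPolicy_mul_div_sub_one R π π₀ (fun τ => (hπ₀ τ).ne') hJ₀.ne'

end

theorem approximate_projection_improves_general
    {T : Type*} [Fintype T] [Nonempty T]
    (R π π₀ : T → ℝ) (hR : ∀ τ, 0 < R τ)
    (hπpos : ∀ τ, 0 < π τ)
    (hπ₀pos : ∀ τ, 0 < π₀ τ)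
    (hkl : klDiv (impPolicy R π₀) π < klDiv (impPolicy R π₀) π₀) :
    Jexp R π₀ < Jexp R π := by
  rw [← one_lt_div (Jexp_pos hR hπ₀pos)]
  linarith [klDiv_impPolicy_sub_klDiv_le hR hπpos hπ₀pos]

/-- Approximate projection still improves: if `KL(Rπ₀ ‖ π) < KL(Rπ₀ ‖ π₀)`
then `J(π) > J(π₀)`. -/
theorem approximate_projection_improves
    {T : Type*} [Fintype T] [Nonempty T]
    (R π π₀ : T → ℝ) (hR : ∀ τ, 0 < R τ)
    (hπpos : ∀ τ, 0 < π τ) (hπsum : ∑ τ, π τ = 1)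
    (hπ₀pos : ∀ τ, 0 < π₀ τ) (hπ₀sum : ∑ τ, π₀ τ = 1)
    (hkl : klDiv (impPolicy R π₀) π < klDiv (impPolicy R π₀) π₀) :
    Jexp R π₀ < Jexp R π :=
  approximate_projection_improves_general R π π₀ hR hπpos hπ₀pos hkl
end

section
/- Let π and μ be policies with π(a|s) > 0 and μ(a|s) > 0 for all s ∈ S, a ∈ A. If Σ_s d^μ(s) Σ_a Q^μ(s,a) μ(a|s) log(π(a|s)/μ(a|s)) > 0, then J(π) > J(μ). That is, any policy whose weighted KL divergence to the improved policy is strictly smaller than that of μ itself achieves strictly larger expected return. -/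
/-!
Write `G s = V^μ(s) log (V^π(s) / V^μ(s))` and `ℓ s = ∑ a, Q^μ(s,a) μ(a|s) log (π(a|s) / μ(a|s))`.
Two applications of the log-sum inequality — to `Q^π(s,a) = r(s,a) + γ ∑ p V^π` against
`Q^μ(s,a)`, then to `V^π(s) = ∑ π Q^π` against `V^μ(s) = ∑ μ Q^μ` — show that `G` is a
supersolution of the evaluation equation of `μ` with reward `ℓ`: `ℓ + γ M_μ G ≤ G`.
The resolvent `(1 - γ M_μ)⁻¹ = ∑ γ^t M_μ^t` has nonnegative entries, so
`∑ d^μ ℓ = d₀ ⬝ (1 - γ M_μ)⁻¹ ℓ ≤ d₀ ⬝ G`, and `G ≤ V^π - V^μ` because `log x ≤ x - 1`.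
-/

/-- Induced state-transition matrix `M_π(s,s') = ∑ a, π(a|s) p(s'|s,a)`. -/
noncomputable def transMat {S A : Type*} [Fintype S] [Fintype A]
    (p : S → A → S → ℝ) (π : S → A → ℝ) : Matrix S S ℝ :=
  Matrix.of fun s s' => ∑ a, π s a * p s a s'

/-- Expected one-step reward `r_π(s) = ∑ a, π(a|s) r(s,a)`. -/
noncomputable def rPol {S A : Type*} [Fintype A]
    (r : S → A → ℝ) (π : S → A → ℝ) (s : S) : ℝ :=
  ∑ a, π s a * r s a

/-- Value function `V^π(s) = ∑_{k} γ^k (M_π^k r_π)(s)`. -/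
noncomputable def Vpi {S A : Type*} [Fintype S] [Fintype A] [DecidableEq S]
    (p : S → A → S → ℝ) (r : S → A → ℝ) (γ : ℝ) (π : S → A → ℝ) (s : S) : ℝ :=
  ∑' k : ℕ, γ ^ k * ((transMat p π ^ k).mulVec (rPol r π)) s

/-- Action-value function `Q^π(s,a) = r(s,a) + γ ∑_{s'} p(s'|s,a) V^π(s')`. -/
noncomputable def Qpi {S A : Type*} [Fintype S] [Fintype A] [DecidableEq S]
    (p : S → A → S → ℝ) (r : S → A → ℝ) (γ : ℝ) (π : S → A → ℝ) (s : S) (a : A) : ℝ :=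
  r s a + γ * ∑ s', p s a s' * Vpi p r γ π s'

/-- Discounted state distribution `d^π(s) = ∑_{t} γ^t (d₀ᵀ M_π^t)(s)`. -/
noncomputable def dPi {S A : Type*} [Fintype S] [Fintype A] [DecidableEq S]
    (p : S → A → S → ℝ) (d₀ : S → ℝ) (γ : ℝ) (π : S → A → ℝ) (s : S) : ℝ :=
  ∑' t : ℕ, γ ^ t * Matrix.vecMul d₀ (transMat p π ^ t) s

/-- Expected return `J(π) = ∑ s, d₀(s) V^π(s)`. -/
noncomputable def Jpi {S A : Type*} [Fintype S] [Fintype A] [DecidableEq S]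
    (p : S → A → S → ℝ) (r : S → A → ℝ) (d₀ : S → ℝ) (γ : ℝ) (π : S → A → ℝ) : ℝ :=
  ∑ s, d₀ s * Vpi p r γ π s

namespace Matrix

theorem tsum_apply_apply {ι m n R : Type*} [AddCommMonoid R] [TopologicalSpace R] [T2Space R]
    {f : ι → Matrix m n R} (hf : Summable f) (i : m) (j : n) :
    (∑' t, f t) i j = ∑' t, f t i j :=
  ((Pi.hasSum.1 (Pi.hasSum.1 hf.hasSum i) j).tsum_eq).symm

section TsumMulVec

variable {ι m n R : Type*} [NonUnitalNonAssocSemiring R] [TopologicalSpace R]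
  [IsTopologicalSemiring R] [T2Space R] {f : ι → Matrix m n R}

theorem tsum_mulVec_apply [Fintype n] (hf : Summable f) (x : n → R) (i : m) :
    ((∑' t, f t) *ᵥ x) i = ∑' t, (f t *ᵥ x) i := by
  have hentry : ∀ j, Summable fun t => f t i j := fun j => Pi.summable.1 (Pi.summable.1 hf i) j
  simp only [mulVec, dotProduct]
  rw [Summable.tsum_finsetSum fun j _ => (hentry j).mul_right (x j)]
  refine Finset.sum_congr rfl fun j _ => ?_
  rw [tsum_apply_apply hf, (hentry j).tsum_mul_right]

theorem vecMul_tsum_apply [Fintype m] (hf : Summable f) (x : m → R) (j : n) :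
    (x ᵥ* ∑' t, f t) j = ∑' t, (x ᵥ* f t) j := by
  have hentry : ∀ i, Summable fun t => f t i j := fun i => Pi.summable.1 (Pi.summable.1 hf i) j
  simp only [vecMul, dotProduct]
  rw [Summable.tsum_finsetSum fun i _ => (hentry i).mul_left (x i)]
  refine Finset.sum_congr rfl fun i _ => ?_
  rw [tsum_apply_apply hf, (hentry i).tsum_mul_left]

end TsumMulVec

section Resolvent

variable {n : Type*} [Fintype n] [DecidableEq n] {M : Matrix n n ℝ} {γ : ℝ}

noncomputable def discountedResolvent (γ : ℝ) (M : Matrix n n ℝ) : Matrix n n ℝ :=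
  ∑' t : ℕ, (γ • M) ^ t

theorem smul_pow_apply (γ : ℝ) (M : Matrix n n ℝ) (t : ℕ) (i j : n) :
    ((γ • M) ^ t) i j = γ ^ t * (M ^ t) i j := by
  rw [smul_pow, smul_apply, smul_eq_mul]

theorem summable_smul_pow (hM : M ∈ rowStochastic ℝ n) (hγ0 : 0 ≤ γ) (hγ1 : γ < 1) :
    Summable fun t : ℕ => (γ • M) ^ t := by
  refine Pi.summable.2 fun i => Pi.summable.2 fun j => ?_
  have hMt : ∀ t : ℕ, M ^ t ∈ rowStochastic ℝ n := fun t => pow_mem hM t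
  refine Summable.of_nonneg_of_le (fun t => ?_) (fun t => ?_)
    (summable_geometric_of_lt_one hγ0 hγ1)
  · rw [smul_pow_apply]
    exact mul_nonneg (pow_nonneg hγ0 t) (nonneg_of_mem_rowStochastic (hMt t))
  · rw [smul_pow_apply]
    exact mul_le_of_le_one_right (pow_nonneg hγ0 t) (le_one_of_mem_rowStochastic (hMt t))

theorem discountedResolvent_eq_one_add_smul_mul (hM : M ∈ rowStochastic ℝ n) (hγ0 : 0 ≤ γ)
    (hγ1 : γ < 1) : discountedResolvent γ M = 1 + (γ • M) * discountedResolvent γ M := by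
  have hs := summable_smul_pow hM hγ0 hγ1
  unfold discountedResolvent
  conv_lhs => rw [hs.tsum_eq_zero_add]
  rw [← hs.tsum_mul_left]
  simp only [pow_zero, pow_succ']

theorem discountedResolvent_eq_one_add_mul_smul (hM : M ∈ rowStochastic ℝ n) (hγ0 : 0 ≤ γ)
    (hγ1 : γ < 1) : discountedResolvent γ M = 1 + discountedResolvent γ M * (γ • M) := by
  have hs := summable_smul_pow hM hγ0 hγ1
  unfold discountedResolvent
  conv_lhs => rw [hs.tsum_eq_zero_add]
  rw [← hs.tsum_mul_right]
  simp only [pow_zero, pow_succ]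

theorem discountedResolvent_nonneg (hM : M ∈ rowStochastic ℝ n) (hγ0 : 0 ≤ γ) (hγ1 : γ < 1)
    (i j : n) : 0 ≤ discountedResolvent γ M i j := by
  rw [discountedResolvent, tsum_apply_apply (summable_smul_pow hM hγ0 hγ1)]
  exact tsum_nonneg fun t => by
    rw [smul_pow_apply]
    exact mul_nonneg (pow_nonneg hγ0 t) (nonneg_of_mem_rowStochastic (pow_mem hM t))

theorem discountedResolvent_mulVec_apply (hM : M ∈ rowStochastic ℝ n) (hγ0 : 0 ≤ γ)
    (hγ1 : γ < 1) (x : n → ℝ) (i : n) :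
    (discountedResolvent γ M *ᵥ x) i = ∑' t : ℕ, γ ^ t * (M ^ t *ᵥ x) i := by
  rw [discountedResolvent, tsum_mulVec_apply (summable_smul_pow hM hγ0 hγ1)]
  simp only [smul_pow, smul_mulVec, Pi.smul_apply, smul_eq_mul]

theorem vecMul_discountedResolvent_apply (hM : M ∈ rowStochastic ℝ n) (hγ0 : 0 ≤ γ)
    (hγ1 : γ < 1) (x : n → ℝ) (j : n) :
    (x ᵥ* discountedResolvent γ M) j = ∑' t : ℕ, γ ^ t * (x ᵥ* M ^ t) j := by
  rw [discountedResolvent, vecMul_tsum_apply (summable_smul_pow hM hγ0 hγ1)]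
  simp only [smul_pow, vecMul_smul, Pi.smul_apply, smul_eq_mul]

theorem discountedResolvent_mulVec_le (hM : M ∈ rowStochastic ℝ n) (hγ0 : 0 ≤ γ) (hγ1 : γ < 1)
    {f g : n → ℝ} (h : ∀ i, f i + γ * (M *ᵥ g) i ≤ g i) (i : n) :
    (discountedResolvent γ M *ᵥ f) i ≤ g i := by
  set R := discountedResolvent γ M
  have hg : g = R *ᵥ ((1 - γ • M) *ᵥ g) := by
    rw [mulVec_mulVec, mul_sub, mul_one, sub_eq_iff_eq_add.2
      (discountedResolvent_eq_one_add_mul_smul hM hγ0 hγ1), one_mulVec]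
  have hgap : 0 ≤ (R *ᵥ ((1 - γ • M) *ᵥ g - f)) i :=
    Finset.sum_nonneg fun j _ => mul_nonneg (discountedResolvent_nonneg hM hγ0 hγ1 i j) (by
      simp only [Pi.sub_apply, sub_mulVec, one_mulVec, smul_mulVec, Pi.smul_apply, smul_eq_mul]
      linarith [h j])
  rw [mulVec_sub, ← hg, Pi.sub_apply] at hgap
  linarith

end Resolvent

end Matrix

theorem Real.mul_log_le_tangent {w x m : ℝ} (hw : 0 ≤ w) (hx : 0 < x) (hm : 0 < m) :
    w * Real.log x ≤ w * (Real.log m - 1) + w * x / m := by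
  have h := Real.log_le_sub_one_of_pos (div_pos hx hm)
  rw [Real.log_div hx.ne' hm.ne'] at h
  have := mul_le_mul_of_nonneg_left h hw
  rw [mul_div_assoc]
  linarith

theorem Finset.sum_mul_log_le_tangent {ι : Type*} (t : Finset ι) {w x : ι → ℝ} {m : ℝ}
    (hw : ∀ i ∈ t, 0 ≤ w i) (hx : ∀ i ∈ t, 0 < x i) (hm : 0 < m) :
    ∑ i ∈ t, w i * Real.log (x i) ≤
      (∑ i ∈ t, w i) * (Real.log m - 1) + (∑ i ∈ t, w i * x i) / m := by
  rw [Finset.sum_mul, Finset.sum_div, ← Finset.sum_add_distrib]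
  exact Finset.sum_le_sum fun i hi => Real.mul_log_le_tangent (hw i hi) (hx i hi) hm

open Finset Matrix

section MDP

variable {S A : Type*} [Fintype S] [Fintype A] [DecidableEq S]
  {p : S → A → S → ℝ} {r : S → A → ℝ} {γ : ℝ} {π μ : S → A → ℝ}

theorem transMat_mem_rowStochastic (hp0 : ∀ s a s', 0 ≤ p s a s')
    (hp1 : ∀ s a, ∑ s', p s a s' = 1) (hπ0 : ∀ s a, 0 ≤ π s a) (hπ1 : ∀ s, ∑ a, π s a = 1) :
    transMat p π ∈ rowStochastic ℝ S := by
  refine mem_rowStochastic_iff_sum.2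
    ⟨fun s s' => sum_nonneg fun a _ => mul_nonneg (hπ0 s a) (hp0 s a s'), fun s => ?_⟩
  simp only [transMat, of_apply]
  rw [sum_comm]
  simp_rw [← mul_sum, hp1, mul_one]
  exact hπ1 s

theorem Vpi_eq_discountedResolvent_mulVec (hγ0 : 0 ≤ γ) (hγ1 : γ < 1)
    (hM : transMat p π ∈ rowStochastic ℝ S) :
    Vpi p r γ π = discountedResolvent γ (transMat p π) *ᵥ rPol r π :=
  funext fun s => (discountedResolvent_mulVec_apply hM hγ0 hγ1 _ s).symm

theorem dPi_eq_vecMul_discountedResolvent (hγ0 : 0 ≤ γ) (hγ1 : γ < 1)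
    (hM : transMat p π ∈ rowStochastic ℝ S) (d₀ : S → ℝ) :
    dPi p d₀ γ π = d₀ ᵥ* discountedResolvent γ (transMat p π) :=
  funext fun s => (vecMul_discountedResolvent_apply hM hγ0 hγ1 _ s).symm

theorem Vpi_eq_sum_mul_Qpi (hγ0 : 0 ≤ γ) (hγ1 : γ < 1)
    (hM : transMat p π ∈ rowStochastic ℝ S) (s : S) :
    Vpi p r γ π s = ∑ a, π s a * Qpi p r γ π s a := by
  have hbellman : Vpi p r γ π = rPol r π + γ • (transMat p π *ᵥ Vpi p r γ π) := by
    rw [Vpi_eq_discountedResolvent_mulVec hγ0 hγ1 hM]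
    conv_lhs => rw [discountedResolvent_eq_one_add_smul_mul hM hγ0 hγ1]
    rw [add_mulVec, one_mulVec, ← mulVec_mulVec, smul_mulVec]
  rw [congrFun hbellman s]
  simp only [Pi.add_apply, Pi.smul_apply, smul_eq_mul, rPol, Qpi, mulVec, dotProduct, transMat,
    of_apply, mul_add, sum_add_distrib, mul_sum, sum_mul]
  rw [sum_comm]
  simp only [mul_left_comm, mul_assoc]

theorem Vpi_nonneg (hγ0 : 0 ≤ γ) (hγ1 : γ < 1)
    (hM : transMat p π ∈ rowStochastic ℝ S) (hr : ∀ s a, 0 ≤ r s a)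
    (hπ0 : ∀ s a, 0 ≤ π s a) (s : S) : 0 ≤ Vpi p r γ π s := by
  rw [Vpi_eq_discountedResolvent_mulVec hγ0 hγ1 hM]
  exact sum_nonneg fun s' _ => mul_nonneg (discountedResolvent_nonneg hM hγ0 hγ1 s s')
    (sum_nonneg fun a _ => mul_nonneg (hπ0 s' a) (hr s' a))

theorem Qpi_pos (hp0 : ∀ s a s', 0 ≤ p s a s') (hr : ∀ s a, 0 < r s a) (hγ0 : 0 ≤ γ)
    (hV : ∀ s, 0 ≤ Vpi p r γ π s) (s : S) (a : A) : 0 < Qpi p r γ π s a :=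
  add_pos_of_pos_of_nonneg (hr s a)
    (mul_nonneg hγ0 (sum_nonneg fun s' _ => mul_nonneg (hp0 s a s') (hV s')))

theorem Vpi_pos [Nonempty A] (hγ0 : 0 ≤ γ) (hγ1 : γ < 1) (hp0 : ∀ s a s', 0 ≤ p s a s')
    (hp1 : ∀ s a, ∑ s', p s a s' = 1) (hr : ∀ s a, 0 < r s a) (hπ : ∀ s a, 0 < π s a)
    (hπ1 : ∀ s, ∑ a, π s a = 1) (s : S) : 0 < Vpi p r γ π s := by
  have hM := transMat_mem_rowStochastic hp0 hp1 (fun s a => (hπ s a).le) hπ1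
  have hV := Vpi_nonneg hγ0 hγ1 hM (fun s a => (hr s a).le) (fun s a => (hπ s a).le)
  rw [Vpi_eq_sum_mul_Qpi hγ0 hγ1 hM]
  exact sum_pos (fun a _ => mul_pos (hπ s a) (Qpi_pos hp0 hr hγ0 hV s a)) univ_nonempty

theorem Qpi_mul_log_ratio_ge (hp0 : ∀ s a s', 0 ≤ p s a s') (hr : ∀ s a, 0 < r s a)
    (hγ0 : 0 ≤ γ) (hVπ : ∀ s, 0 < Vpi p r γ π s) (hVμ : ∀ s, 0 < Vpi p r γ μ s) (s : S) (a : A) :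
    γ * ∑ s', p s a s' * (Vpi p r γ μ s' * Real.log (Vpi p r γ π s' / Vpi p r γ μ s')) ≤
      Qpi p r γ μ s a * Real.log (Qpi p r γ π s a / Qpi p r γ μ s a) := by
  set Vπ := Vpi p r γ π
  set Vμ := Vpi p r γ μ
  have hQπ := Qpi_pos hp0 hr hγ0 (fun s => (hVπ s).le) s a
  have hQμ := Qpi_pos hp0 hr hγ0 (fun s => (hVμ s).le) s a
  set m := Qpi p r γ π s a / Qpi p r γ μ s a
  have hm : 0 < m := div_pos hQπ hQμ
  have hreward := Real.mul_log_le_tangent (hr s a).le one_pos hm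
  have hnext := sum_mul_log_le_tangent univ (w := fun s' => γ * p s a s' * Vμ s')
    (x := fun s' => Vπ s' / Vμ s') (fun s' _ => by have := hp0 s a s'; have := hVμ s'; positivity)
    (fun s' _ => div_pos (hVπ s') (hVμ s')) hm
  have hw : ∑ s', γ * p s a s' * Vμ s' = γ * ∑ s', p s a s' * Vμ s' := by
    rw [mul_sum]; simp only [mul_assoc]
  have hwx : ∑ s', γ * p s a s' * Vμ s' * (Vπ s' / Vμ s') = γ * ∑ s', p s a s' * Vπ s' := by
    rw [mul_sum]
    refine sum_congr rfl fun s' _ => ?_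
    field_simp [(hVμ s').ne']
  rw [hw, hwx] at hnext
  rw [Real.log_one, mul_zero, mul_one] at hreward
  have hQμ_eq : Qpi p r γ μ s a = r s a + γ * ∑ s', p s a s' * Vμ s' := rfl
  have hQπ_eq : Qpi p r γ π s a = r s a + γ * ∑ s', p s a s' * Vπ s' := rfl
  calc γ * ∑ s', p s a s' * (Vμ s' * Real.log (Vπ s' / Vμ s'))
      = ∑ s', γ * p s a s' * Vμ s' * Real.log (Vπ s' / Vμ s') := by
        rw [mul_sum]; simp only [mul_assoc]
    _ ≤ Qpi p r γ μ s a * (Real.log m - 1) + Qpi p r γ π s a / m := by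
        rw [hQμ_eq, hQπ_eq, add_mul, add_div]; linarith
    _ = Qpi p r γ μ s a * Real.log m := by
        simp only [m]; field_simp; ring

theorem Vpi_mul_log_ratio_ge [Nonempty A] (hγ0 : 0 ≤ γ) (hγ1 : γ < 1)
    (hp0 : ∀ s a s', 0 ≤ p s a s') (hp1 : ∀ s a, ∑ s', p s a s' = 1) (hr : ∀ s a, 0 < r s a)
    (hπ : ∀ s a, 0 < π s a) (hπ1 : ∀ s, ∑ a, π s a = 1)
    (hμ : ∀ s a, 0 < μ s a) (hμ1 : ∀ s, ∑ a, μ s a = 1) (s : S) :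
    ∑ a, Qpi p r γ μ s a * μ s a * Real.log (π s a / μ s a) +
        γ * (transMat p μ *ᵥ fun s => Vpi p r γ μ s * Real.log (Vpi p r γ π s / Vpi p r γ μ s)) s ≤
      Vpi p r γ μ s * Real.log (Vpi p r γ π s / Vpi p r γ μ s) := by
  have hMπ := transMat_mem_rowStochastic hp0 hp1 (fun s a => (hπ s a).le) hπ1
  have hMμ := transMat_mem_rowStochastic hp0 hp1 (fun s a => (hμ s a).le) hμ1
  have hVπ := Vpi_pos hγ0 hγ1 hp0 hp1 hr hπ hπ1
  have hVμ := Vpi_pos hγ0 hγ1 hp0 hp1 hr hμ hμ1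
  set Vπ := Vpi p r γ π
  set Vμ := Vpi p r γ μ
  set Qπ := Qpi p r γ π
  set Qμ := Qpi p r γ μ
  have hQπ : ∀ a, 0 < Qπ s a := Qpi_pos hp0 hr hγ0 (fun s => (hVπ s).le) s
  have hQμ : ∀ a, 0 < Qμ s a := Qpi_pos hp0 hr hγ0 (fun s => (hVμ s).le) s
  have hnext : γ * (transMat p μ *ᵥ fun s => Vμ s * Real.log (Vπ s / Vμ s)) s ≤
      ∑ a, μ s a * Qμ s a * Real.log (Qπ s a / Qμ s a) := by
    simp only [mulVec, dotProduct, transMat, of_apply, sum_mul]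
    rw [sum_comm, mul_sum]
    refine sum_le_sum fun a _ => ?_
    have := mul_le_mul_of_nonneg_left
      (Qpi_mul_log_ratio_ge hp0 hr hγ0 hVπ hVμ s a) (hμ s a).le
    simp only [mul_sum, mul_assoc] at this ⊢
    simpa only [mul_left_comm] using this
  set m := Vπ s / Vμ s
  have hm : 0 < m := div_pos (hVπ s) (hVμ s)
  have htangent := sum_mul_log_le_tangent univ (w := fun a => μ s a * Qμ s a)
    (x := fun a => π s a / μ s a * (Qπ s a / Qμ s a))
    (fun a _ => (mul_pos (hμ s a) (hQμ a)).le)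
    (fun a _ => mul_pos (div_pos (hπ s a) (hμ s a)) (div_pos (hQπ a) (hQμ a))) hm
  have hw : ∑ a, μ s a * Qμ s a = Vμ s := (Vpi_eq_sum_mul_Qpi hγ0 hγ1 hMμ s).symm
  have hwx : ∑ a, μ s a * Qμ s a * (π s a / μ s a * (Qπ s a / Qμ s a)) = Vπ s := by
    rw [show Vπ s = ∑ a, π s a * Qπ s a from Vpi_eq_sum_mul_Qpi hγ0 hγ1 hMπ s]
    refine sum_congr rfl fun a _ => ?_
    field_simp [(hμ s a).ne', (hQμ a).ne']
  rw [hw, hwx] at htangent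
  have hlog : ∀ a, Real.log (π s a / μ s a * (Qπ s a / Qμ s a)) =
      Real.log (π s a / μ s a) + Real.log (Qπ s a / Qμ s a) := fun a =>
    Real.log_mul (div_pos (hπ s a) (hμ s a)).ne' (div_pos (hQπ a) (hQμ a)).ne'
  calc ∑ a, Qμ s a * μ s a * Real.log (π s a / μ s a) +
        γ * (transMat p μ *ᵥ fun s => Vμ s * Real.log (Vπ s / Vμ s)) s
      ≤ ∑ a, μ s a * Qμ s a * Real.log (π s a / μ s a * (Qπ s a / Qμ s a)) := by
        simp only [hlog, mul_add, sum_add_distrib]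
        have hcomm : ∑ a, Qμ s a * μ s a * Real.log (π s a / μ s a) =
            ∑ a, μ s a * Qμ s a * Real.log (π s a / μ s a) :=
          sum_congr rfl fun a _ => by ring
        linarith
    _ ≤ Vμ s * (Real.log m - 1) + Vπ s / m := htangent
    _ = Vμ s * Real.log m := by
        simp only [m]; field_simp [(hVπ s).ne', (hVμ s).ne']; ring

theorem sum_dPi_mul_le_Jpi_sub [Nonempty A] (hγ0 : 0 ≤ γ) (hγ1 : γ < 1)
    (hp0 : ∀ s a s', 0 ≤ p s a s') (hp1 : ∀ s a, ∑ s', p s a s' = 1) (hr : ∀ s a, 0 < r s a)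
    (hπ : ∀ s a, 0 < π s a) (hπ1 : ∀ s, ∑ a, π s a = 1)
    (hμ : ∀ s a, 0 < μ s a) (hμ1 : ∀ s, ∑ a, μ s a = 1) {d₀ : S → ℝ} (hd₀ : ∀ s, 0 ≤ d₀ s) :
    ∑ s, dPi p d₀ γ μ s * ∑ a, Qpi p r γ μ s a * μ s a * Real.log (π s a / μ s a) ≤
      Jpi p r d₀ γ π - Jpi p r d₀ γ μ := by
  have hMμ := transMat_mem_rowStochastic hp0 hp1 (fun s a => (hμ s a).le) hμ1
  have hVπ := Vpi_pos hγ0 hγ1 hp0 hp1 hr hπ hπ1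
  have hVμ := Vpi_pos hγ0 hγ1 hp0 hp1 hr hμ hμ1
  have hgap : ∀ s, Vpi p r γ μ s * Real.log (Vpi p r γ π s / Vpi p r γ μ s) ≤
      Vpi p r γ π s - Vpi p r γ μ s := fun s => by
    have := mul_le_mul_of_nonneg_left
      (Real.log_le_sub_one_of_pos (div_pos (hVπ s) (hVμ s))) (hVμ s).le
    rwa [mul_sub, mul_div_cancel₀ _ (hVμ s).ne', mul_one] at this
  calc _ = d₀ ⬝ᵥ (discountedResolvent γ (transMat p μ) *ᵥ
        fun s => ∑ a, Qpi p r γ μ s a * μ s a * Real.log (π s a / μ s a)) := by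
        rw [dotProduct_mulVec, ← dPi_eq_vecMul_discountedResolvent hγ0 hγ1 hMμ]
        rfl
    _ ≤ ∑ s, d₀ s * (Vpi p r γ μ s * Real.log (Vpi p r γ π s / Vpi p r γ μ s)) :=
        sum_le_sum fun s _ => mul_le_mul_of_nonneg_left (discountedResolvent_mulVec_le hMμ hγ0 hγ1
          (Vpi_mul_log_ratio_ge hγ0 hγ1 hp0 hp1 hr hπ hπ1 hμ hμ1) s) (hd₀ s)
    _ ≤ ∑ s, d₀ s * (Vpi p r γ π s - Vpi p r γ μ s) :=
        sum_le_sum fun s _ => mul_le_mul_of_nonneg_left (hgap s) (hd₀ s)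
    _ = Jpi p r d₀ γ π - Jpi p r d₀ γ μ := by simp only [Jpi, mul_sub, sum_sub_distrib]

end MDP

theorem approximate_projection_improves_state_action_general
    {S A : Type*} [Fintype S] [Fintype A] [DecidableEq S] [Nonempty A]
    (p : S → A → S → ℝ) (hp0 : ∀ s a s', 0 ≤ p s a s') (hp1 : ∀ s a, ∑ s', p s a s' = 1)
    (r : S → A → ℝ) (hr : ∀ s a, 0 < r s a)
    (d₀ : S → ℝ) (hd₀ : ∀ s, 0 ≤ d₀ s)
    (γ : ℝ) (hγ0 : 0 ≤ γ) (hγ1 : γ < 1)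
    (π μ : S → A → ℝ)
    (hπpos : ∀ s a, 0 < π s a) (hπsum : ∀ s, ∑ a, π s a = 1)
    (hμpos : ∀ s a, 0 < μ s a) (hμsum : ∀ s, ∑ a, μ s a = 1)
    (hpos : 0 < ∑ s, dPi p d₀ γ μ s * ∑ a, Qpi p r γ μ s a * μ s a * Real.log (π s a / μ s a)) :
    Jpi p r d₀ γ μ < Jpi p r d₀ γ π :=
  sub_pos.1 <| hpos.trans_le <|
    sum_dPi_mul_le_Jpi_sub hγ0 hγ1 hp0 hp1 hr hπpos hπsum hμpos hμsum hd₀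

/-- If `∑ s, d^μ(s) ∑ a, Q^μ(s,a) μ(a|s) log (π(a|s) / μ(a|s)) > 0` then `J(π) > J(μ)`:
approximately projecting onto the improved policy strictly improves the return. -/
theorem approximate_projection_improves_state_action
    {S A : Type*} [Fintype S] [Fintype A] [DecidableEq S] [Nonempty S] [Nonempty A]
    (p : S → A → S → ℝ) (hp0 : ∀ s a s', 0 ≤ p s a s') (hp1 : ∀ s a, ∑ s', p s a s' = 1)
    (r : S → A → ℝ) (hr : ∀ s a, 0 < r s a)
    (d₀ : S → ℝ) (hd₀ : ∀ s, 0 ≤ d₀ s) (hd₀sum : ∑ s, d₀ s = 1)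
    (γ : ℝ) (hγ0 : 0 ≤ γ) (hγ1 : γ < 1)
    (π μ : S → A → ℝ)
    (hπpos : ∀ s a, 0 < π s a) (hπsum : ∀ s, ∑ a, π s a = 1)
    (hμpos : ∀ s a, 0 < μ s a) (hμsum : ∀ s, ∑ a, μ s a = 1)
    (hpos : 0 < ∑ s, dPi p d₀ γ μ s * ∑ a, Qpi p r γ μ s a * μ s a * Real.log (π s a / μ s a)) :
    Jpi p r d₀ γ μ < Jpi p r d₀ γ π :=
  approximate_projection_improves_state_action_general p hp0 hp1 r hr d₀ hd₀ γ hγ0 hγ1 π μ hπpos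
    hπsum hμpos hμsum hpos
end
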